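/- arXiv:1903.10063 — 2 statements merged into one kernel-verified Lean document; each statement's English description precedes it below -/
import Mathlib

section
/- Let m ≥ 2 and p ≥ 1, let μ be a probability measure on m×p real matrices, let q₁,…,q_m be measurable functions from matrices to [0,1] with Σ_j q_j(X) = 1 for μ-a.e. X, and let β⁰ ∈ ℝᵖ with ‖β⁰‖ = 1. Assume the rank ordering property relative to β⁰ holds, and that for μ-a.e. X the values ⟨x₁,β⁰⟩,…,⟨x_m,β⁰⟩ are pairwise distinct. Then S(β⁰) ≥ S(β) for every β ∈ ℝᵖ; in particular, β⁰ maximizes the multinomial population score over the unit sphere of ℝᵖ. -/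
open MeasureTheory
open scoped Classical

/-- The multinomial population score
`S(β) = (1/(m(m−1)))·Σ_j ∫ q_j(X)·#{k ≠ j : ⟨x_j,β⟩ > ⟨x_k,β⟩} dμ(X)`,
where the "matrix" `X` is encoded by its rows `X : Fin m → ℝᵖ`. -/
noncomputable def multiScore {m p : ℕ}
    (μ : Measure (Fin m → EuclideanSpace ℝ (Fin p)))
    (q : Fin m → (Fin m → EuclideanSpace ℝ (Fin p)) → ℝ)
    (β : EuclideanSpace ℝ (Fin p)) : ℝ :=
  (1 / ((m : ℝ) * ((m : ℝ) - 1))) *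
    ∑ j : Fin m, ∫ X, q j X *
      ((Finset.univ.filter fun k : Fin m =>
        k ≠ j ∧ (inner ℝ (X k) β : ℝ) < (inner ℝ (X j) β : ℝ)).card : ℝ) ∂μ

/-!
For fixed `X` and a pair `j ≠ k`, the pair contributes `q_j`, `q_k` or `0` to the integrand of
the score according to how `β` orders `⟨x_j, β⟩` and `⟨x_k, β⟩`, so at most `max q_j q_k`.
By the rank ordering property, and because `β⁰` ranks no two rows equally, `β⁰` attains this
maximum for every pair, for almost every `X`; summing over pairs and integrating gives the claim.
-/

open Finset

lemma Finset.sum_sum_le_sum_sum_of_add_swap_le {ι : Type*} [Fintype ι] {f g : ι → ι → ℝ}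
    (h : ∀ j k, f j k + f k j ≤ g j k + g k j) :
    ∑ j, ∑ k, f j k ≤ ∑ j, ∑ k, g j k := by
  have hsum := sum_le_sum fun j (_ : j ∈ univ) => sum_le_sum fun k (_ : k ∈ univ) => h j k
  simp only [sum_add_distrib] at hsum
  rw [sum_comm (f := fun j k => f k j), sum_comm (f := fun j k => g k j)] at hsum
  linarith

lemma ite_lt_add_ite_lt_le_max {a b wa wb : ℝ} (ha : 0 ≤ wa) :
    (if b < a then wa else 0) + (if a < b then wb else 0) ≤ max wa wb := by
  split_ifs with h₁ h₂ h₂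
  · exact absurd h₁ (lt_asymm h₂)
  · simp
  · simp
  · simp [ha]

lemma ite_lt_add_ite_lt_eq_max {a b wa wb : ℝ} (hrank : wb ≤ wa ↔ b ≤ a) (hab : a ≠ b) :
    (if b < a then wa else 0) + (if a < b then wb else 0) = max wa wb := by
  rcases hab.lt_or_gt with h | h
  · have : wa < wb := lt_of_not_ge (hrank.not.2 h.not_ge)
    simp [h, h.not_gt, this.le]
  · simp [h, h.not_gt, hrank.2 h.le]

variable {ι : Type*} [Fintype ι] [DecidableEq ι]

noncomputable def weightedWins (w s : ι → ℝ) : ℝ :=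
  ∑ j, w j * (#{k | k ≠ j ∧ s k < s j} : ℝ)

lemma weightedWins_eq_sum_sum_ite (w s : ι → ℝ) :
    weightedWins w s = ∑ j, ∑ k, if s k < s j then w j else 0 := by
  refine sum_congr rfl fun j _ => ?_
  rw [natCast_card_filter, mul_sum]
  refine sum_congr rfl fun k _ => ?_
  by_cases h : s k < s j
  · simp [h, ne_of_apply_ne s h.ne]
  · simp [h]

theorem weightedWins_le_of_rankOrdered {w s₀ : ι → ℝ} (hw : ∀ i, 0 ≤ w i)
    (hrank : ∀ j k, w k ≤ w j ↔ s₀ k ≤ s₀ j) (hs₀ : Function.Injective s₀) (s : ι → ℝ) :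
    weightedWins w s ≤ weightedWins w s₀ := by
  rw [weightedWins_eq_sum_sum_ite, weightedWins_eq_sum_sum_ite]
  refine sum_sum_le_sum_sum_of_add_swap_le fun j k => ?_
  rcases eq_or_ne j k with rfl | hjk
  · simp
  · rw [ite_lt_add_ite_lt_eq_max (hrank j k) (hs₀.ne hjk)]
    exact ite_lt_add_ite_lt_le_max (hw j)

section Integrability

variable {α : Type*} [MeasurableSpace α]

lemma measurable_card_filter_lt {s : ι → α → ℝ} (hs : ∀ i, Measurable (s i)) (j : ι) :
    Measurable fun x => (#{k | k ≠ j ∧ s k x < s j x} : ℝ) := by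
  simp only [natCast_card_filter]
  refine Finset.measurable_sum _ fun k _ => Measurable.ite ?_ measurable_const measurable_const
  exact (MeasurableSet.const (k ≠ j)).inter (measurableSet_lt (hs k) (hs j))

lemma integrable_mul_card_filter_lt {μ : Measure α} [IsFiniteMeasure μ] {f : α → ℝ}
    (hf : Measurable f) (hf01 : ∀ x, f x ∈ Set.Icc (0 : ℝ) 1) {s : ι → α → ℝ}
    (hs : ∀ i, Measurable (s i)) (j : ι) :
    Integrable (fun x => f x * (#{k | k ≠ j ∧ s k x < s j x} : ℝ)) μ := by
  refine .of_bound (hf.mul (measurable_card_filter_lt hs j)).aestronglyMeasurable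
    (Fintype.card ι) (ae_of_all _ fun x => ?_)
  have hcard : (#{k | k ≠ j ∧ s k x < s j x} : ℝ) ≤ Fintype.card ι := by
    exact_mod_cast card_filter_le _ _
  rw [norm_mul, Real.norm_of_nonneg (hf01 x).1, Real.norm_of_nonneg (Nat.cast_nonneg _)]
  exact (mul_le_of_le_one_left (Nat.cast_nonneg _) (hf01 x).2).trans hcard

lemma integrable_weightedWins {μ : Measure α} [IsFiniteMeasure μ] {w : ι → α → ℝ}
    (hw : ∀ i, Measurable (w i)) (hw01 : ∀ i x, w i x ∈ Set.Icc (0 : ℝ) 1)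
    {s : ι → α → ℝ} (hs : ∀ i, Measurable (s i)) :
    Integrable (fun x => weightedWins (fun j => w j x) (fun k => s k x)) μ :=
  integrable_finsetSum _ fun j _ => integrable_mul_card_filter_lt (hw j) (hw01 j) hs j

end Integrability

lemma natCast_mul_natCast_sub_one_nonneg (n : ℕ) : 0 ≤ (n : ℝ) * ((n : ℝ) - 1) := by
  rcases n.eq_zero_or_pos with rfl | hn
  · simp
  · exact mul_nonneg n.cast_nonneg (sub_nonneg.2 (Nat.one_le_cast.2 hn))

lemma multiScore_eq_integral_weightedWins {m p : ℕ}
    (μ : Measure (Fin m → EuclideanSpace ℝ (Fin p))) [IsFiniteMeasure μ]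
    {q : Fin m → (Fin m → EuclideanSpace ℝ (Fin p)) → ℝ} (hqmeas : ∀ j, Measurable (q j))
    (hq01 : ∀ j X, q j X ∈ Set.Icc (0 : ℝ) 1) (β : EuclideanSpace ℝ (Fin p)) :
    multiScore μ q β = 1 / ((m : ℝ) * ((m : ℝ) - 1)) *
      ∫ X, weightedWins (fun j => q j X) (fun k => inner ℝ (X k) β) ∂μ := by
  simp only [multiScore, weightedWins]
  rw [integral_finsetSum]
  exact fun j _ => integrable_mul_card_filter_lt (hqmeas j) (hq01 j)
    (fun k => (measurable_pi_apply k).inner measurable_const) j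

theorem multinomial_score_maximized_at_true_parameter_general {m p : ℕ}
    (μ : Measure (Fin m → EuclideanSpace ℝ (Fin p))) [IsProbabilityMeasure μ]
    (q : Fin m → (Fin m → EuclideanSpace ℝ (Fin p)) → ℝ)
    (hqmeas : ∀ j, Measurable (q j))
    (hq01 : ∀ j X, q j X ∈ Set.Icc (0 : ℝ) 1)
    (β0 : EuclideanSpace ℝ (Fin p))
    -- rank ordering property relative to β0
    (hrank : ∀ᵐ X ∂μ, ∀ j k : Fin m,
      q k X ≤ q j X ↔ (inner ℝ (X k) β0 : ℝ) ≤ (inner ℝ (X j) β0 : ℝ))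
    -- the values ⟨x_j, β0⟩ are a.e. pairwise distinct
    (hdistinct : ∀ᵐ X ∂μ, ∀ j k : Fin m, j ≠ k →
      (inner ℝ (X j) β0 : ℝ) ≠ (inner ℝ (X k) β0 : ℝ)) :
    ∀ β : EuclideanSpace ℝ (Fin p), multiScore μ q β ≤ multiScore μ q β0 := by
  intro β
  have hint : ∀ γ : EuclideanSpace ℝ (Fin p),
      Integrable (fun X => weightedWins (fun j => q j X) (fun k => inner ℝ (X k) γ)) μ :=
    fun γ => integrable_weightedWins hqmeas hq01
      fun k => (measurable_pi_apply k).inner measurable_const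
  rw [multiScore_eq_integral_weightedWins μ hqmeas hq01,
    multiScore_eq_integral_weightedWins μ hqmeas hq01]
  refine mul_le_mul_of_nonneg_left ?_
    (one_div_nonneg.2 (natCast_mul_natCast_sub_one_nonneg m))
  refine integral_mono_ae (hint β) (hint β0) ?_
  filter_upwards [hrank, hdistinct] with X hrankX hdistinctX
  exact weightedWins_le_of_rankOrdered (fun j => (hq01 j X).1) hrankX
    (fun j k => not_imp_not.1 (hdistinctX j k)) _

theorem multinomial_score_maximized_at_true_parameter {m p : ℕ}
    (hm : 2 ≤ m) (hp : 1 ≤ p)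
    (μ : Measure (Fin m → EuclideanSpace ℝ (Fin p))) [IsProbabilityMeasure μ]
    (q : Fin m → (Fin m → EuclideanSpace ℝ (Fin p)) → ℝ)
    (hqmeas : ∀ j, Measurable (q j))
    (hq01 : ∀ j X, q j X ∈ Set.Icc (0 : ℝ) 1)
    (hqsum : ∀ᵐ X ∂μ, ∑ j : Fin m, q j X = 1)
    (β0 : EuclideanSpace ℝ (Fin p)) (hβ0 : ‖β0‖ = 1)
    -- rank ordering property relative to β0
    (hrank : ∀ᵐ X ∂μ, ∀ j k : Fin m,
      q k X ≤ q j X ↔ (inner ℝ (X k) β0 : ℝ) ≤ (inner ℝ (X j) β0 : ℝ))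
    -- the values ⟨x_j, β0⟩ are a.e. pairwise distinct
    (hdistinct : ∀ᵐ X ∂μ, ∀ j k : Fin m, j ≠ k →
      (inner ℝ (X j) β0 : ℝ) ≠ (inner ℝ (X k) β0 : ℝ)) :
    ∀ β : EuclideanSpace ℝ (Fin p), multiScore μ q β ≤ multiScore μ q β0 :=
  multinomial_score_maximized_at_true_parameter_general μ q hqmeas hq01 β0 hrank hdistinct
end

section
/- Let m ≥ 2 and p ≥ 1, let μ be a probability measure on m×p real matrices, let q₁,…,q_m be measurable functions from matrices to [0,1] with Σ_j q_j(X) = 1 for μ-a.e. X, and let β⁰ ∈ ℝᵖ with ‖β⁰‖ = 1. Assume the rank ordering property relative to β⁰ holds, and that for μ-a.e. X the values ⟨x₁,β⁰⟩,…,⟨x_m,β⁰⟩ are pairwise distinct. Let β ∈ ℝᵖ be such that μ{X : ⟨x_j − x_k, β⟩ = 0} = 0 for all j ≠ k. Then S(β⁰) − S(β) = (1/(2m(m−1)))·Σ_{j≠k} ∫_{X_{j,k,β}} |q_j(X) − q_k(X)| dμ(X), where the sum is over ordered pairs (j,k) with j ≠ k and X_{j,k,β} = {X : sign(⟨x_j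 − x_k, β⟩) ≠ sign(⟨x_j − x_k, β⁰⟩)}. -/
/-!
Counting wins pair by pair, `m(m−1)·S(β) = Σ_{j,k} ∫_{⟨x_k,β⟩ < ⟨x_j,β⟩} q_j dμ`.
In `S(β⁰) − S(β)` group the terms of `(j,k)` and `(k,j)`: off a null set exactly one of `j, k`
wins under each of `β⁰` and `β`, so the group vanishes when the two winners agree, and otherwise
equals `|q_j − q_k|` because under rank ordering the `β⁰`-winner carries the larger weight.
Every unordered pair is counted twice, hence the factor `1/2`.
-/

open MeasureTheory
open scoped Classical

open Finset

lemma Real.measurable_sign : Measurable Real.sign :=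
  Measurable.ite measurableSet_Iio measurable_const
    (Measurable.ite measurableSet_Ioi measurable_const measurable_const)

theorem Finset.sum_sum_add_sum_sum_swap {ι M : Type*} [Fintype ι] [AddCommMonoid M]
    (f : ι → ι → M) :
    ∑ i, ∑ j, f i j + ∑ i, ∑ j, f i j = ∑ i, ∑ j, (f i j + f j i) := by
  nth_rewrite 2 [Finset.sum_comm]
  simp only [← Finset.sum_add_distrib]

lemma ite_lt_sub_ite_lt_add_ite_lt_sub_ite_lt {a b x y x' y' : ℝ}
    (hxy : x ≠ y) (hxy' : x' ≠ y') (hab : b ≤ a ↔ y ≤ x) :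
    ((if y < x then a else 0) - (if y' < x' then a else 0)) +
      ((if x < y then b else 0) - (if x' < y' then b else 0)) =
    if Real.sign (x' - y') ≠ Real.sign (x - y) then |a - b| else 0 := by
  rcases hxy.lt_or_gt with h | h <;> rcases hxy'.lt_or_gt with h' | h'
  · simp [h, h', h.not_gt, h'.not_gt, Real.sign_of_neg, sub_neg]
  · have hab' : a < b := by simpa [h.not_ge] using hab.not
    simp only [h, h', h.not_gt, h'.not_gt, if_true, if_false, Real.sign_of_neg (sub_neg.2 h),
      Real.sign_of_pos (sub_pos.2 h')]
    rw [if_pos (by norm_num), abs_of_neg (sub_neg.2 hab')]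
    ring
  · have hab' : b ≤ a := hab.2 h.le
    simp only [h, h', h.not_gt, h'.not_gt, if_true, if_false, Real.sign_of_pos (sub_pos.2 h),
      Real.sign_of_neg (sub_neg.2 h')]
    rw [if_pos (by norm_num), abs_of_nonneg (sub_nonneg.2 hab')]
    ring
  · simp [h, h', h.not_gt, h'.not_gt, Real.sign_of_pos, sub_pos]

noncomputable def pairScore {m p : ℕ} (μ : Measure (Fin m → EuclideanSpace ℝ (Fin p)))
    (q : Fin m → (Fin m → EuclideanSpace ℝ (Fin p)) → ℝ)
    (γ : EuclideanSpace ℝ (Fin p)) (j k : Fin m) : ℝ :=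
  ∫ X in {X | (inner ℝ (X k) γ : ℝ) < inner ℝ (X j) γ}, q j X ∂μ

section PairScore

variable {m p : ℕ} {μ : Measure (Fin m → EuclideanSpace ℝ (Fin p))}
  {q : Fin m → (Fin m → EuclideanSpace ℝ (Fin p)) → ℝ}

lemma measurableSet_inner_lt_inner (γ : EuclideanSpace ℝ (Fin p)) (j k : Fin m) :
    MeasurableSet {X : Fin m → EuclideanSpace ℝ (Fin p) |
      (inner ℝ (X k) γ : ℝ) < inner ℝ (X j) γ} :=
  measurableSet_lt (by fun_prop) (by fun_prop)

lemma multiScore_eq_sum_pairScore (hq : ∀ j, Integrable (q j) μ)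
    (γ : EuclideanSpace ℝ (Fin p)) :
    multiScore μ q γ = 1 / ((m : ℝ) * ((m : ℝ) - 1)) * ∑ j, ∑ k, pairScore μ q γ j k := by
  unfold multiScore pairScore
  congr 1
  refine sum_congr rfl fun j _ => ?_
  have hcount : ∀ X : Fin m → EuclideanSpace ℝ (Fin p),
      q j X * (#{k | k ≠ j ∧ (inner ℝ (X k) γ : ℝ) < inner ℝ (X j) γ} : ℝ) =
        ∑ k, {X | (inner ℝ (X k) γ : ℝ) < inner ℝ (X j) γ}.indicator (q j) X := by
    intro X
    rw [filter_congr fun k _ => and_iff_right_of_imp fun h hkj => (hkj ▸ h).false,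
      card_filter, Nat.cast_sum, mul_sum]
    simp [Set.indicator_apply]
  simp_rw [hcount]
  rw [integral_finsetSum _ fun k _ => (hq j).indicator (measurableSet_inner_lt_inner γ j k)]
  simp_rw [integral_indicator (measurableSet_inner_lt_inner _ j _)]

lemma pairScore_sub_add_pairScore_sub {β0 β : EuclideanSpace ℝ (Fin p)} {j k : Fin m}
    (hq : ∀ i, Integrable (q i) μ)
    (hrank : ∀ᵐ X ∂μ, q k X ≤ q j X ↔ (inner ℝ (X k) β0 : ℝ) ≤ inner ℝ (X j) β0)
    (hdistinct : ∀ᵐ X ∂μ, (inner ℝ (X j) β0 : ℝ) ≠ inner ℝ (X k) β0)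
    (hnull : μ {X | (inner ℝ (X j - X k) β : ℝ) = 0} = 0) :
    (pairScore μ q β0 j k - pairScore μ q β j k) + (pairScore μ q β0 k j - pairScore μ q β k j) =
      ∫ X in {X | Real.sign (inner ℝ (X j - X k) β) ≠ Real.sign (inner ℝ (X j - X k) β0)},
        |q j X - q k X| ∂μ := by
  have hD : MeasurableSet {X : Fin m → EuclideanSpace ℝ (Fin p) |
      Real.sign (inner ℝ (X j - X k) β) ≠ Real.sign (inner ℝ (X j - X k) β0)} :=
    (measurableSet_eq_fun (Real.measurable_sign.comp (by fun_prop))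
      (Real.measurable_sign.comp (by fun_prop))).compl
  have hint : ∀ γ i l, Integrable
      ({X | (inner ℝ (X l) γ : ℝ) < inner ℝ (X i) γ}.indicator (q i)) μ :=
    fun γ i l => (hq i).indicator (measurableSet_inner_lt_inner γ i l)
  have hne : ∀ᵐ X ∂μ, (inner ℝ (X j) β : ℝ) ≠ inner ℝ (X k) β := by
    refine measure_mono_null (fun X hX => ?_) hnull
    simpa [inner_sub_left, sub_eq_zero] using hX
  have hpointwise :
      {X | Real.sign (inner ℝ (X j - X k) β) ≠ Real.sign (inner ℝ (X j - X k) β0)}.indicator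
        (fun X => |q j X - q k X|) =ᵐ[μ] fun X =>
        ({X | (inner ℝ (X k) β0 : ℝ) < inner ℝ (X j) β0}.indicator (q j) X -
          {X | (inner ℝ (X k) β : ℝ) < inner ℝ (X j) β}.indicator (q j) X) +
        ({X | (inner ℝ (X j) β0 : ℝ) < inner ℝ (X k) β0}.indicator (q k) X -
          {X | (inner ℝ (X j) β : ℝ) < inner ℝ (X k) β}.indicator (q k) X) := by
    filter_upwards [hrank, hdistinct, hne] with X hrankX hdistinctX hneX
    simp only [Set.indicator_apply, Set.mem_ofPred_eq, inner_sub_left]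
    exact (ite_lt_sub_ite_lt_add_ite_lt_sub_ite_lt hdistinctX hneX hrankX).symm
  rw [← integral_indicator hD, integral_congr_ae hpointwise,
    integral_add ((hint _ _ _).sub' (hint _ _ _)) ((hint _ _ _).sub' (hint _ _ _)),
    integral_sub (hint _ _ _) (hint _ _ _), integral_sub (hint _ _ _) (hint _ _ _)]
  simp only [pairScore, integral_indicator (measurableSet_inner_lt_inner _ _ _)]

end PairScore

theorem multinomial_excess_risk_identity_general {m p : ℕ}
    (μ : Measure (Fin m → EuclideanSpace ℝ (Fin p))) [IsProbabilityMeasure μ]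
    (q : Fin m → (Fin m → EuclideanSpace ℝ (Fin p)) → ℝ)
    (hqmeas : ∀ j, Measurable (q j))
    (hq01 : ∀ j X, q j X ∈ Set.Icc (0 : ℝ) 1)
    (β0 : EuclideanSpace ℝ (Fin p))
    -- rank ordering property relative to β0
    (hrank : ∀ᵐ X ∂μ, ∀ j k : Fin m,
      q k X ≤ q j X ↔ (inner ℝ (X k) β0 : ℝ) ≤ (inner ℝ (X j) β0 : ℝ))
    -- the values ⟨x_j, β0⟩ are a.e. pairwise distinct
    (hdistinct : ∀ᵐ X ∂μ, ∀ j k : Fin m, j ≠ k →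
      (inner ℝ (X j) β0 : ℝ) ≠ (inner ℝ (X k) β0 : ℝ))
    (β : EuclideanSpace ℝ (Fin p))
    (hnull : ∀ j k : Fin m, j ≠ k →
      μ {X | (inner ℝ (X j - X k) β : ℝ) = 0} = 0) :
    multiScore μ q β0 - multiScore μ q β =
      (1 / (2 * (m : ℝ) * ((m : ℝ) - 1))) *
        ∑ j : Fin m, ∑ k : Fin m,
          if j ≠ k then
            ∫ X in {X : Fin m → EuclideanSpace ℝ (Fin p) |
                Real.sign (inner ℝ (X j - X k) β : ℝ) ≠
                  Real.sign (inner ℝ (X j - X k) β0 : ℝ)},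
              |q j X - q k X| ∂μ
          else 0 := by
  have hq j : Integrable (q j) μ :=
    .of_mem_Icc 0 1 (hqmeas j).aemeasurable (ae_of_all _ (hq01 j))
  have hpair : ∀ j k,
      (pairScore μ q β0 j k - pairScore μ q β j k) +
        (pairScore μ q β0 k j - pairScore μ q β k j) =
      if j ≠ k then
        ∫ X in {X : Fin m → EuclideanSpace ℝ (Fin p) |
            Real.sign (inner ℝ (X j - X k) β : ℝ) ≠ Real.sign (inner ℝ (X j - X k) β0 : ℝ)},
          |q j X - q k X| ∂μ
      else 0 := by
    intro j k
    split_ifs with hjk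
    · exact pairScore_sub_add_pairScore_sub hq (hrank.mono fun X h => h j k)
        (hdistinct.mono fun X h => h j k hjk) (hnull j k hjk)
    · obtain rfl := not_not.1 hjk
      simp [pairScore]
  simp_rw [multiScore_eq_sum_pairScore hq, ← mul_sub, ← sum_sub_distrib, ← hpair,
    ← Finset.sum_sum_add_sum_sum_swap]
  rw [mul_assoc 2]
  generalize (m : ℝ) * ((m : ℝ) - 1) = c
  ring

theorem multinomial_excess_risk_identity {m p : ℕ}
    (hm : 2 ≤ m) (hp : 1 ≤ p)
    (μ : Measure (Fin m → EuclideanSpace ℝ (Fin p))) [IsProbabilityMeasure μ]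
    (q : Fin m → (Fin m → EuclideanSpace ℝ (Fin p)) → ℝ)
    (hqmeas : ∀ j, Measurable (q j))
    (hq01 : ∀ j X, q j X ∈ Set.Icc (0 : ℝ) 1)
    (hqsum : ∀ᵐ X ∂μ, ∑ j : Fin m, q j X = 1)
    (β0 : EuclideanSpace ℝ (Fin p)) (hβ0 : ‖β0‖ = 1)
    -- rank ordering property relative to β0
    (hrank : ∀ᵐ X ∂μ, ∀ j k : Fin m,
      q k X ≤ q j X ↔ (inner ℝ (X k) β0 : ℝ) ≤ (inner ℝ (X j) β0 : ℝ))
    -- the values ⟨x_j, β0⟩ are a.e. pairwise distinct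
    (hdistinct : ∀ᵐ X ∂μ, ∀ j k : Fin m, j ≠ k →
      (inner ℝ (X j) β0 : ℝ) ≠ (inner ℝ (X k) β0 : ℝ))
    (β : EuclideanSpace ℝ (Fin p))
    (hnull : ∀ j k : Fin m, j ≠ k →
      μ {X | (inner ℝ (X j - X k) β : ℝ) = 0} = 0) :
    multiScore μ q β0 - multiScore μ q β =
      (1 / (2 * (m : ℝ) * ((m : ℝ) - 1))) *
        ∑ j : Fin m, ∑ k : Fin m,
          if j ≠ k then
            ∫ X in {X : Fin m → EuclideanSpace ℝ (Fin p) |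
                Real.sign (inner ℝ (X j - X k) β : ℝ) ≠
                  Real.sign (inner ℝ (X j - X k) β0 : ℝ)},
              |q j X - q k X| ∂μ
          else 0 :=
  multinomial_excess_risk_identity_general μ q hqmeas hq01 β0 hrank hdistinct β hnull
end
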